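/- Every nonzero self-reciprocal polynomial factors into irreducible self-reciprocal polynomials: if S : Polynomial ℂ is nonzero and S⋆[natDegree S] = S, then there exists a multiset l of polynomials over ℂ such that every P ∈ l is self-reciprocal with respect to natDegree P and has natDegree P ≤ 2, and S = l.prod. -/

import Mathlib

/-- The conjugate-reciprocal of `P` with respect to `N`. -/
noncomputable def creflect (N : ℕ) (P : Polynomial ℂ) : Polynomial ℂ :=
  Polynomial.reflect N (P.map (starRingEnd ℂ))

/-!
The roots of a self-reciprocal polynomial are nonzero and stable under `z ↦ (conj z)⁻¹`. A root
`z` therefore yields the divisor `X - z` if `‖z‖ = 1`, and `(X - z) * (X - (conj z)⁻¹)` otherwise.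
Such a divisor `P` satisfies `P⋆ = c • P` with `‖c‖ = 1`, and multiplying it by a square root of
`c` makes it self-reciprocal. The quotient of a self-reciprocal polynomial by a self-reciprocal
divisor is again self-reciprocal, so induction on the degree finishes the proof.
-/

open Polynomial ComplexConjugate

theorem creflect_mul {P Q : ℂ[X]} {m n : ℕ} (hP : P.natDegree ≤ m) (hQ : Q.natDegree ≤ n) :
    creflect (m + n) (P * Q) = creflect m P * creflect n Q := by
  rw [creflect, Polynomial.map_mul]
  exact reflect_mul _ _ (natDegree_map_le.trans hP) (natDegree_map_le.trans hQ)

theorem creflect_C_mul (N : ℕ) (a : ℂ) (P : ℂ[X]) :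
    creflect N (C a * P) = C (conj a) * creflect N P := by
  simp only [creflect, Polynomial.map_mul, map_C, reflect_C_mul]

theorem creflect_X_sub_C {z : ℂ} (hz : z ≠ 0) :
    creflect 1 (X - C z) = C (-conj z) * (X - C (conj z)⁻¹) := by
  have hz' : conj z ≠ 0 := (_root_.map_ne_zero _).2 hz
  rw [creflect, Polynomial.map_sub, map_X, map_C, reflect_sub, reflect_C, ← pow_one X,
    reflect_monomial, revAt_le le_rfl, mul_sub, ← C_mul, neg_mul, mul_inv_cancel₀ hz']
  simp only [tsub_self, pow_zero, pow_one, C_neg, C_1]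
  ring

theorem creflect_X_sub_C_of_norm_eq_one {z : ℂ} (hz : ‖z‖ = 1) :
    creflect 1 (X - C z) = C (-conj z) * (X - C z) := by
  have hz0 : z ≠ 0 := norm_ne_zero_iff.1 (by rw [hz]; exact one_ne_zero)
  rw [creflect_X_sub_C hz0, Complex.inv_def, Complex.conj_conj, Complex.normSq_conj,
    Complex.normSq_eq_norm_sq, hz]
  simp

theorem creflect_X_sub_C_mul_X_sub_C_inv_conj {z : ℂ} (hz : z ≠ 0) :
    creflect 2 ((X - C z) * (X - C (conj z)⁻¹)) =
      C (conj z / z) * ((X - C z) * (X - C (conj z)⁻¹)) := by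
  have hw : (conj z)⁻¹ ≠ 0 := inv_ne_zero ((_root_.map_ne_zero _).2 hz)
  rw [creflect_mul (natDegree_X_sub_C_le z) (natDegree_X_sub_C_le _), creflect_X_sub_C hz,
    creflect_X_sub_C hw, map_inv₀ (starRingEnd ℂ), Complex.conj_conj, inv_inv,
    show conj z / z = -conj z * -z⁻¹ by ring, C_mul]
  ring

theorem exists_creflect_C_mul_eq_self {N : ℕ} {P : ℂ[X]} {c : ℂ}
    (h : creflect N P = C c * P) (hc : ‖c‖ = 1) :
    ∃ a ≠ 0, creflect N (C a * P) = C a * P := by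
  obtain ⟨a, rfl⟩ := IsAlgClosed.exists_pow_nat_eq c two_pos
  have ha : ‖a‖ = 1 := by
    rwa [norm_pow, pow_eq_one_iff_of_nonneg (norm_nonneg a) two_ne_zero] at hc
  refine ⟨a, norm_ne_zero_iff.1 (by rw [ha]; exact one_ne_zero), ?_⟩
  rw [creflect_C_mul, h, ← mul_assoc, ← C_mul]
  congr 2
  rw [pow_two, ← mul_assoc, mul_comm (conj a), Complex.mul_conj, Complex.normSq_eq_norm_sq, ha]
  simp

theorem isRoot_inv_conj_of_creflect_eq_self {S : ℂ[X]} {N : ℕ} (h : creflect N S = S)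
    (hN : S.natDegree ≤ N) {z : ℂ} (hz : z ≠ 0) (hr : S.IsRoot z) : S.IsRoot (conj z)⁻¹ := by
  have : Invertible (conj z) := invertibleOfNonzero ((_root_.map_ne_zero _).2 hz)
  have hr' : (S.map (starRingEnd ℂ)).eval₂ (RingHom.id ℂ) (conj z) = 0 := by
    rw [eval₂_id, eval_map, eval₂_hom, hr.eq_zero, map_zero]
  have := (eval₂_reflect_eq_zero_iff _ _ N _ (natDegree_map_le.trans hN)).2 hr'
  rwa [eval₂_id, invOf_eq_inv, ← creflect, h] at this

theorem coeff_zero_ne_zero_of_creflect_eq_self {S : ℂ[X]} (hS : S ≠ 0)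
    (h : creflect S.natDegree S = S) : S.coeff 0 ≠ 0 := by
  rw [← h, creflect, coeff_reflect, revAt_zero, coeff_map, coeff_natDegree]
  simpa using hS

theorem creflect_eq_self_of_mul {T Q : ℂ[X]} (hT : T ≠ 0)
    (hTsr : creflect T.natDegree T = T) (h : creflect (T * Q).natDegree (T * Q) = T * Q) :
    creflect Q.natDegree Q = Q := by
  rcases eq_or_ne Q 0 with rfl | hQ
  · simp [creflect]
  rw [natDegree_mul hT hQ, creflect_mul le_rfl le_rfl, hTsr] at h
  exact mul_left_cancel₀ hT h

theorem exists_dvd_creflect_eq_C_mul {S : ℂ[X]} (hsr : creflect S.natDegree S = S)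
    (hdeg : 0 < S.natDegree) :
    ∃ (P : ℂ[X]) (c : ℂ), creflect P.natDegree P = C c * P ∧ ‖c‖ = 1 ∧
      0 < P.natDegree ∧ P.natDegree ≤ 2 ∧ P ∣ S := by
  have hS : S ≠ 0 := ne_zero_of_natDegree_gt hdeg
  obtain ⟨z, hz⟩ := Complex.exists_root (natDegree_pos_iff_degree_pos.1 hdeg)
  have hz0 : z ≠ 0 := by
    rintro rfl
    exact coeff_zero_ne_zero_of_creflect_eq_self hS hsr (coeff_zero_eq_eval_zero S ▸ hz)
  by_cases hz1 : ‖z‖ = 1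
  · refine ⟨X - C z, -conj z, ?_, by simpa using hz1, by simp, by simp, dvd_iff_isRoot.2 hz⟩
    rw [natDegree_X_sub_C]
    exact creflect_X_sub_C_of_norm_eq_one hz1
  have hzw : z - (conj z)⁻¹ ≠ 0 := by
    refine sub_ne_zero.2 fun h => hz1 ?_
    have hnorm := congrArg norm h
    rwa [norm_inv, Complex.norm_conj, ← mul_eq_one_iff_eq_inv₀ (norm_ne_zero_iff.2 hz0),
      ← pow_two, pow_eq_one_iff_of_nonneg (norm_nonneg z) two_ne_zero] at hnorm
  have hdeg2 : ((X - C z) * (X - C (conj z)⁻¹)).natDegree = 2 := by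
    rw [natDegree_mul (X_sub_C_ne_zero _) (X_sub_C_ne_zero _), natDegree_X_sub_C,
      natDegree_X_sub_C]
  have hw := isRoot_inv_conj_of_creflect_eq_self hsr le_rfl hz0 hz
  refine ⟨(X - C z) * (X - C (conj z)⁻¹), conj z / z, ?_, by simp [hz0], by omega, by omega,
    (isCoprime_X_sub_C_of_isUnit_sub hzw.isUnit).mul_dvd (dvd_iff_isRoot.2 hz)
      (dvd_iff_isRoot.2 hw)⟩
  rw [hdeg2]
  exact creflect_X_sub_C_mul_X_sub_C_inv_conj hz0

theorem exists_creflect_eq_self_dvd {S : ℂ[X]} (hsr : creflect S.natDegree S = S)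
    (hdeg : 0 < S.natDegree) :
    ∃ T : ℂ[X], creflect T.natDegree T = T ∧ 0 < T.natDegree ∧ T.natDegree ≤ 2 ∧ T ∣ S := by
  obtain ⟨P, c, hP, hc, hpos, hle, hdvd⟩ := exists_dvd_creflect_eq_C_mul hsr hdeg
  obtain ⟨a, ha, haP⟩ := exists_creflect_C_mul_eq_self hP hc
  rw [← natDegree_C_mul (p := P) ha] at hpos hle haP
  exact ⟨C a * P, haP, hpos, hle, (C_mul_dvd ha).2 hdvd⟩

theorem selfReciprocal_factorization_general (S : Polynomial ℂ)
    (hsr : creflect S.natDegree S = S) :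
    ∃ l : Multiset (Polynomial ℂ),
      (∀ P ∈ l, creflect P.natDegree P = P ∧ P.natDegree ≤ 2) ∧ S = l.prod := by
  induction hn : S.natDegree using Nat.strong_induction_on generalizing S with
  | _ n ih =>
  rcases Nat.eq_zero_or_pos n with rfl | hpos
  · exact ⟨{S}, by simpa [hn] using hsr, by simp⟩
  obtain ⟨T, hTsr, hTpos, hTle, Q, rfl⟩ := exists_creflect_eq_self_dvd hsr (hn ▸ hpos)
  have hT : T ≠ 0 := ne_zero_of_natDegree_gt hTpos
  have hQ : Q ≠ 0 := by rintro rfl; simp at hn; omega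
  obtain ⟨l, hl, rfl⟩ := ih Q.natDegree (by rw [← hn, natDegree_mul hT hQ]; omega) Q
    (creflect_eq_self_of_mul hT hTsr hsr) rfl
  exact ⟨T ::ₘ l, by simpa [hTsr, hTle] using hl, by simp⟩

/-- Every nonzero self-reciprocal polynomial factors into irreducible
self-reciprocal polynomials (of degree at most two). -/
theorem selfReciprocal_factorization (S : Polynomial ℂ) (hS : S ≠ 0)
    (hsr : creflect S.natDegree S = S) :
    ∃ l : Multiset (Polynomial ℂ),
      (∀ P ∈ l, creflect P.natDegree P = P ∧ P.natDegree ≤ 2) ∧ S = l.prod :=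
  selfReciprocal_factorization_general S hsr
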